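/- arXiv:2104.00502 — 9 statements merged into one kernel-verified Lean document; each statement's English description precedes it below -/
import Mathlib

section
/- Let a be a Barker sequence of even length n ≥ 4. Then |Σ_{j=1}^{n} a_j| = √n, and consequently n = 4r² for some positive integer r; in particular n is a multiple of 4. -/
/-!
Write `S = ∑ a_j` and `C_k` for the autocorrelations. Expanding the square gives
`S² = n + 2 ∑_{k=1}^{n-1} C_k`. For `x, y = ±1` we have `x y ≡ x + y - 1 (mod 4)`, which yields
Turyn's congruence `C_k + C_{n-k} ≡ n (mod 4)`, while `C_k ≡ n - k (mod 2)`. For even `n` the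
Barker condition then forces `C_k = 0` at even `k`, hence `4 ∣ n` (take `k = 2`), and then
`C_k + C_{n-k} = 0` for every `k`. So `S² = n`, and as `S ≡ n (mod 2)` is even, `n = 4 (S / 2)²`.
-/

/-- The `k`th aperiodic autocorrelation of the sequence `a` of length `n`:
`C_k(a) = ∑_{j=1}^{n-k} a_j a_{j+k}`. -/
def aperiodicCorr (a : ℕ → ℤ) (n k : ℕ) : ℤ :=
  ∑ j ∈ Finset.Icc 1 (n - k), a j * a (j + k)

open Finset

section IntervalSums

variable {M : Type*} [AddCommMonoid M]

lemma sum_Icc_one_add_right (f : ℕ → M) (m k : ℕ) :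
    ∑ j ∈ Icc 1 m, f (j + k) = ∑ j ∈ Icc (k + 1) (m + k), f j := by
  rw [add_comm k 1, ← map_add_right_Icc, sum_map]
  rfl

lemma sum_Icc_one_add_sum_Icc {m n : ℕ} (f : ℕ → M) (hmn : m ≤ n) :
    ∑ j ∈ Icc 1 m, f j + ∑ j ∈ Icc (m + 1) n, f j = ∑ j ∈ Icc 1 n, f j := by
  simpa only [← Icc_add_one_left_eq_Ioc, zero_add] using
    sum_Ioc_consecutive f (Nat.zero_le m) hmn

lemma sum_Icc_one_sub_reflect (f : ℕ → M) (n : ℕ) :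
    ∑ k ∈ Icc 1 (n - 1), f (n - k) = ∑ k ∈ Icc 1 (n - 1), f k := by
  refine sum_nbij' (n - ·) (n - ·) ?_ ?_ ?_ ?_ fun _ _ => rfl <;> intro k hk <;>
    simp only [mem_Icc] at hk ⊢ <;> omega

end IntervalSums

lemma sum_Icc_eq_zero_of_add_reflect_eq_zero {f : ℕ → ℤ} {n : ℕ}
    (h : ∀ k ∈ Icc 1 (n - 1), f k + f (n - k) = 0) : ∑ k ∈ Icc 1 (n - 1), f k = 0 := by
  have : ∑ k ∈ Icc 1 (n - 1), f k + ∑ k ∈ Icc 1 (n - 1), f (n - k) = 0 := by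
    rw [← sum_add_distrib]; exact sum_eq_zero h
  rw [sum_Icc_one_sub_reflect] at this
  omega

lemma sum_modEq_card_of_eq_one_or_neg_one {ι : Type*} {s : Finset ι} {f : ι → ℤ}
    (hf : ∀ i ∈ s, f i = 1 ∨ f i = -1) : ∑ i ∈ s, f i ≡ #s [ZMOD 2] := by
  refine (Int.modEq_iff_dvd.mpr ?_).symm
  rw [show ∑ i ∈ s, f i - #s = ∑ i ∈ s, (f i - 1) by simp [sum_sub_distrib]]
  exact dvd_sum fun i hi => by rcases hf i hi with h | h <;> simp [h]

lemma mul_eq_one_or_neg_one {x y : ℤ} (hx : x = 1 ∨ x = -1) (hy : y = 1 ∨ y = -1) :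
    x * y = 1 ∨ x * y = -1 := by
  rcases hx with rfl | rfl <;> rcases hy with rfl | rfl <;> norm_num

lemma four_dvd_sub_one_mul_sub_one {x y : ℤ} (hx : x = 1 ∨ x = -1) (hy : y = 1 ∨ y = -1) :
    4 ∣ (x - 1) * (y - 1) := by
  rcases hx with rfl | rfl <;> rcases hy with rfl | rfl <;> norm_num

section AperiodicCorr

variable {a : ℕ → ℤ} {n k m : ℕ}

lemma aperiodicCorr_self (a : ℕ → ℤ) (n : ℕ) : aperiodicCorr a n n = 0 := by
  simp [aperiodicCorr]

lemma aperiodicCorr_succ (hk : k ≤ n) :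
    aperiodicCorr a (n + 1) k = aperiodicCorr a n k + a (n + 1 - k) * a (n + 1) := by
  rw [aperiodicCorr, aperiodicCorr, show n + 1 - k = n - k + 1 by omega,
    sum_Icc_succ_top (by omega), show n - k + 1 + k = n + 1 by omega]

lemma sum_Icc_pred_aperiodicCorr (a : ℕ → ℤ) (n : ℕ) :
    ∑ k ∈ Icc 1 (n - 1), aperiodicCorr a n k = ∑ k ∈ Icc 1 n, aperiodicCorr a n k := by
  refine sum_subset (Icc_subset_Icc_right (Nat.sub_le n 1)) fun k hk hk' => ?_
  simp only [mem_Icc] at hk hk'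
  rw [show k = n by omega, aperiodicCorr_self]

theorem sq_sum_Icc_eq_sum_sq_add_two_mul_sum_aperiodicCorr (a : ℕ → ℤ) (n : ℕ) :
    (∑ j ∈ Icc 1 n, a j) ^ 2 =
      ∑ j ∈ Icc 1 n, a j ^ 2 + 2 * ∑ k ∈ Icc 1 (n - 1), aperiodicCorr a n k := by
  induction n with
  | zero => simp
  | succ n ih =>
    have hcorr : ∑ k ∈ Icc 1 n, aperiodicCorr a (n + 1) k =
        ∑ k ∈ Icc 1 (n - 1), aperiodicCorr a n k + a (n + 1) * ∑ j ∈ Icc 1 n, a j := by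
      have hrefl := sum_Icc_one_sub_reflect a (n + 1)
      rw [Nat.add_sub_cancel] at hrefl
      rw [sum_Icc_pred_aperiodicCorr, ← hrefl, mul_sum, ← sum_add_distrib]
      refine sum_congr rfl fun k hk => ?_
      rw [aperiodicCorr_succ (mem_Icc.mp hk).2, mul_comm]
    rw [Nat.add_sub_cancel, hcorr, sum_Icc_succ_top (by omega), sum_Icc_succ_top (by omega)]
    linear_combination ih

lemma sum_Icc_sq_of_eq_one_or_neg_one (ha : ∀ j, 1 ≤ j → j ≤ n → a j = 1 ∨ a j = -1) :
    ∑ j ∈ Icc 1 n, a j ^ 2 = n := by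
  have hsq : ∀ j ∈ Icc 1 n, a j ^ 2 = 1 := fun j hj => by
    obtain ⟨h1, h2⟩ := mem_Icc.mp hj
    rcases ha j h1 h2 with h | h <;> simp [h]
  simp [sum_congr rfl hsq]

lemma aperiodicCorr_modEq_two (ha : ∀ j, 1 ≤ j → j ≤ n → a j = 1 ∨ a j = -1)
    (hkm : k + m = n) : aperiodicCorr a n k ≡ m [ZMOD 2] := by
  have hpm : ∀ j ∈ Icc 1 m, a j * a (j + k) = 1 ∨ a j * a (j + k) = -1 := fun j hj => by
    obtain ⟨h1, h2⟩ := mem_Icc.mp hj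
    exact mul_eq_one_or_neg_one (ha j h1 (by omega)) (ha (j + k) (by omega) (by omega))
  simpa [aperiodicCorr, show n - k = m by omega] using sum_modEq_card_of_eq_one_or_neg_one hpm

lemma aperiodicCorr_modEq_four (ha : ∀ j, 1 ≤ j → j ≤ n → a j = 1 ∨ a j = -1)
    (hkm : k + m = n) :
    aperiodicCorr a n k ≡ ∑ j ∈ Icc 1 m, a j + ∑ j ∈ Icc (k + 1) n, a j - m [ZMOD 4] := by
  -- `x y = x + y - 1 + (x - 1) (y - 1)`, and the last term is divisible by `4` for `x, y = ±1`
  have hexpand : aperiodicCorr a n k - (∑ j ∈ Icc 1 m, a j + ∑ j ∈ Icc (k + 1) n, a j - m) =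
      ∑ j ∈ Icc 1 m, (a j - 1) * (a (j + k) - 1) := by
    simp only [aperiodicCorr, ← hkm, add_comm k m,
      ← sum_Icc_one_add_right, sub_one_mul, mul_sub_one, sum_sub_distrib, sum_const,
      Nat.card_Icc, Nat.add_sub_cancel, nsmul_eq_mul, mul_one]
    ring
  refine (Int.modEq_iff_dvd.mpr ?_).symm
  rw [hexpand]
  refine dvd_sum fun j hj => ?_
  obtain ⟨h1, h2⟩ := mem_Icc.mp hj
  exact four_dvd_sub_one_mul_sub_one (ha j h1 (by omega)) (ha (j + k) (by omega) (by omega))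

lemma sum_Icc_modEq_two (ha : ∀ j, 1 ≤ j → j ≤ n → a j = 1 ∨ a j = -1) :
    ∑ j ∈ Icc 1 n, a j ≡ n [ZMOD 2] := by
  simpa using sum_modEq_card_of_eq_one_or_neg_one fun j hj =>
    ha j (mem_Icc.mp hj).1 (mem_Icc.mp hj).2

lemma aperiodicCorr_add_aperiodicCorr_modEq (ha : ∀ j, 1 ≤ j → j ≤ n → a j = 1 ∨ a j = -1)
    (hkm : k + m = n) : aperiodicCorr a n k + aperiodicCorr a n m ≡ n [ZMOD 4] := by
  have hk := aperiodicCorr_modEq_four ha hkm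
  have hm := aperiodicCorr_modEq_four ha ((add_comm m k).trans hkm)
  have hsk := sum_Icc_one_add_sum_Icc a (show k ≤ n by omega)
  have hsm := sum_Icc_one_add_sum_Icc a (show m ≤ n by omega)
  have hS := sum_Icc_modEq_two ha
  unfold Int.ModEq at *
  omega

end AperiodicCorr

def IsBarker (a : ℕ → ℤ) (n : ℕ) : Prop :=
  (∀ j, 1 ≤ j → j ≤ n → a j = 1 ∨ a j = -1) ∧
    ∀ k, 1 ≤ k → k ≤ n - 1 → aperiodicCorr a n k ∈ ({-1, 0, 1} : Set ℤ)

namespace IsBarker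

variable {a : ℕ → ℤ} {n : ℕ}

lemma four_dvd_of_even (h : IsBarker a n) (hn : 3 ≤ n) (hne : Even n) : 4 ∣ n := by
  obtain ⟨ha, hbarker⟩ := h
  have h2 := aperiodicCorr_modEq_two ha (k := 2) (m := n - 2) (by omega)
  have h2' := aperiodicCorr_modEq_two ha (k := n - 2) (m := 2) (by omega)
  have hsum := aperiodicCorr_add_aperiodicCorr_modEq ha (k := 2) (m := n - 2) (by omega)
  have hb := hbarker 2 (by omega) (by omega)
  have hb' := hbarker (n - 2) (by omega) (by omega)
  simp only [Set.mem_insert_iff, Set.mem_singleton_iff] at hb hb'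
  obtain ⟨t, rfl⟩ := hne
  unfold Int.ModEq at *
  omega

lemma aperiodicCorr_add_aperiodicCorr_eq_zero_of_even (h : IsBarker a n) (hn : 3 ≤ n)
    (hne : Even n) {k m : ℕ} (hk : 1 ≤ k) (hm : 1 ≤ m) (hkm : k + m = n) :
    aperiodicCorr a n k + aperiodicCorr a n m = 0 := by
  have h4 := h.four_dvd_of_even hn hne
  obtain ⟨ha, hbarker⟩ := h
  have hk2 := aperiodicCorr_modEq_two ha hkm
  have hm2 := aperiodicCorr_modEq_two ha ((add_comm m k).trans hkm)
  have hsum := aperiodicCorr_add_aperiodicCorr_modEq ha hkm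
  have hb := hbarker k hk (by omega)
  have hb' := hbarker m hm (by omega)
  simp only [Set.mem_insert_iff, Set.mem_singleton_iff] at hb hb'
  unfold Int.ModEq at *
  omega

end IsBarker

theorem stmt_4 (n : ℕ) (hn : 4 ≤ n) (hne : Even n) (a : ℕ → ℤ)
    (ha : ∀ j, 1 ≤ j → j ≤ n → a j = 1 ∨ a j = -1)
    (hbarker : ∀ k, 1 ≤ k → k ≤ n - 1 → aperiodicCorr a n k ∈ ({-1, 0, 1} : Set ℤ)) :
    ((|∑ j ∈ Finset.Icc 1 n, a j| : ℤ) : ℝ) = Real.sqrt n ∧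
    (∃ r : ℕ, 0 < r ∧ n = 4 * r ^ 2) ∧ 4 ∣ n := by
  have hb : IsBarker a n := ⟨ha, hbarker⟩
  set S := ∑ j ∈ Icc 1 n, a j
  have hcorr : ∑ k ∈ Icc 1 (n - 1), aperiodicCorr a n k = 0 :=
    sum_Icc_eq_zero_of_add_reflect_eq_zero fun k hk => by
      obtain ⟨hk1, hkn⟩ := mem_Icc.mp hk
      exact hb.aperiodicCorr_add_aperiodicCorr_eq_zero_of_even (by omega) hne hk1 (by omega)
        (by omega)
  have hS2 : S ^ 2 = n := by
    rw [sq_sum_Icc_eq_sum_sq_add_two_mul_sum_aperiodicCorr, hcorr,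
      sum_Icc_sq_of_eq_one_or_neg_one ha, mul_zero, add_zero]
  have hS : S ≡ n [ZMOD 2] := sum_Icc_modEq_two ha
  obtain ⟨t, ht⟩ : 2 ∣ S := by
    obtain ⟨u, rfl⟩ := hne
    unfold Int.ModEq at hS
    omega
  have hn4 : n = 4 * t.natAbs ^ 2 := by
    zify
    rw [sq_abs, ← hS2, ht]
    ring
  have ht0 : 0 < t.natAbs := Nat.pos_of_ne_zero fun h0 => by simp [h0] at hn4; omega
  refine ⟨?_, ⟨t.natAbs, ht0, hn4⟩, ⟨_, hn4⟩⟩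
  rw [Int.cast_abs, ← Real.sqrt_sq_eq_abs]
  exact_mod_cast congrArg (Real.sqrt ∘ (↑)) hS2
end

section
/- Let a be a binary sequence of length n > 1 and let 1 ≤ k < n. Then C_{n−k}(a) ≡ T_k(a) (mod 4), where T_k(a) = Σ_{j=1}^{k} a_j a_{n+1−j}. -/
/-- `T_k(a) = ∑_{j=1}^{k} a_j a_{n+1-j}`. -/
def barkerT (a : ℕ → ℤ) (n k : ℕ) : ℤ :=
  ∑ j ∈ Finset.Icc 1 k, a j * a (n + 1 - j)

/-!
For odd `x, y` we have `x * y ≡ x + y - 1 (mod 4)`, so a sum `∑ x_j y_j` of products of odd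
numbers depends modulo 4 only on `∑ x_j` and `∑ y_j`. Both `C_{n-k}(a)` and `T_k(a)` pair
`a_1, …, a_k` with the last `k` entries `a_{n-k+1}, …, a_n` of `a` (in opposite orders), hence
they agree modulo 4.
-/

open Finset

theorem Int.mul_modEq_add_sub_one_of_odd {x y : ℤ} (hx : Odd x) (hy : Odd y) :
    x * y ≡ x + y - 1 [ZMOD 4] := by
  obtain ⟨u, rfl⟩ := hx
  obtain ⟨v, rfl⟩ := hy
  exact Int.modEq_iff_dvd.2 ⟨-(u * v), by ring⟩

theorem Int.sum_mul_modEq_of_odd {ι : Type*} {s : Finset ι} {x y : ι → ℤ}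
    (hx : ∀ i ∈ s, Odd (x i)) (hy : ∀ i ∈ s, Odd (y i)) :
    ∑ i ∈ s, x i * y i ≡ ∑ i ∈ s, x i + ∑ i ∈ s, y i - #s [ZMOD 4] := by
  calc ∑ i ∈ s, x i * y i
      ≡ ∑ i ∈ s, (x i + y i - 1) [ZMOD 4] :=
        Int.ModEq.sum fun i hi => Int.mul_modEq_add_sub_one_of_odd (hx i hi) (hy i hi)
    _ = ∑ i ∈ s, x i + ∑ i ∈ s, y i - #s := by
        simp [sum_sub_distrib, sum_add_distrib]

theorem Int.sum_mul_modEq_sum_mul_of_odd {ι : Type*} {s : Finset ι} {x y z : ι → ℤ}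
    (hx : ∀ i ∈ s, Odd (x i)) (hy : ∀ i ∈ s, Odd (y i)) (hz : ∀ i ∈ s, Odd (z i))
    (hyz : ∑ i ∈ s, y i = ∑ i ∈ s, z i) :
    ∑ i ∈ s, x i * y i ≡ ∑ i ∈ s, x i * z i [ZMOD 4] := by
  have hxz := Int.sum_mul_modEq_of_odd hx hz
  rw [← hyz] at hxz
  exact (Int.sum_mul_modEq_of_odd hx hy).trans hxz.symm

theorem odd_of_eq_one_or_eq_neg_one {x : ℤ} (hx : x = 1 ∨ x = -1) : Odd x := by
  rcases hx with rfl | rfl <;> decide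

theorem sum_Icc_add_sub_eq_sum_Icc_reflect (a : ℕ → ℤ) {n k : ℕ} (hkn : k ≤ n) :
    ∑ j ∈ Icc 1 k, a (j + (n - k)) = ∑ j ∈ Icc 1 k, a (n + 1 - j) := by
  refine sum_nbij' (fun j => k + 1 - j) (fun j => k + 1 - j) ?_ ?_ ?_ ?_ ?_ <;>
    intro j hj <;> simp only [mem_Icc] at hj ⊢ <;> first | omega | congr 1; omega

theorem stmt_6_general (n : ℕ) (a : ℕ → ℤ)
    (ha : ∀ j, 1 ≤ j → j ≤ n → a j = 1 ∨ a j = -1) :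
    ∀ k, 1 ≤ k → k < n → aperiodicCorr a n (n - k) ≡ barkerT a n k [ZMOD 4] := by
  intro k _ hkn
  have hodd : ∀ j, 1 ≤ j → j ≤ n → Odd (a j) := fun j h₁ h₂ =>
    odd_of_eq_one_or_eq_neg_one (ha j h₁ h₂)
  rw [aperiodicCorr, barkerT, Nat.sub_sub_self hkn.le]
  refine Int.sum_mul_modEq_sum_mul_of_odd ?_ ?_ ?_ (sum_Icc_add_sub_eq_sum_Icc_reflect a hkn.le) <;>
    intro j hj <;> rw [mem_Icc] at hj <;> exact hodd _ (by omega) (by omega)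

theorem stmt_6 (n : ℕ) (hn : 1 < n) (a : ℕ → ℤ)
    (ha : ∀ j, 1 ≤ j → j ≤ n → a j = 1 ∨ a j = -1) :
    ∀ k, 1 ≤ k → k < n → aperiodicCorr a n (n - k) ≡ barkerT a n k [ZMOD 4] :=
  stmt_6_general n a ha
end

section
/- Let a be a weak symmetric binary sequence of length n and let 1 ≤ k < n. Then T_k(a) = 0 if k is even, and T_k(a) = a_k a_{n+1−k} if k is odd, where T_k(a) = Σ_{j=1}^{k} a_j a_{n+1−j}. -/
/-!
Pair the terms of `T_k` as `(1, 2), (3, 4), …`. For odd `j`, multiplying the weak-symmetry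
relation `a_j a_{j+1} + a_{n+1-j} a_{n-j} = 0` by `a_{j+1} a_{n+1-j}` and using `a_i² = 1` turns it
into `a_j a_{n+1-j} + a_{j+1} a_{n-j} = 0`, so each pair cancels and only the unpaired last term
survives when `k` is odd.
-/

open Finset

theorem sum_Icc_one_two_mul_eq_zero {M : Type*} [AddCommMonoid M] (f : ℕ → M) (i : ℕ)
    (h : ∀ j < i, f (2 * j + 1) + f (2 * j + 2) = 0) :
    ∑ j ∈ Icc 1 (2 * i), f j = 0 := by
  induction i with
  | zero => simp
  | succ i ih =>
    rw [show 2 * (i + 1) = 2 * i + 1 + 1 by ring, sum_Icc_succ_top (by omega),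
      sum_Icc_succ_top (by omega), ih fun j hj => h j (by omega), zero_add, add_assoc,
      h i (by omega)]

theorem mul_add_mul_eq_zero_of_mul_eq_neg {R : Type*} [CommRing R] {x y z w : R}
    (hy : y * y = 1) (hz : z * z = 1) (h : x * y = -(z * w)) :
    x * z + y * w = 0 := by
  linear_combination (y * z) * h - x * z * hy - y * w * hz

theorem weakSymm_of_odd_lt {R : Type*} [CommRing R] {n : ℕ} {a : ℕ → R} (h4 : 4 ∣ n)
    (hws : ∀ j, Odd j → 1 ≤ j → j < n / 2 →
      a j * a (j + 1) = -(a (n + 1 - j) * a (n - j)))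
    {j : ℕ} (hj : Odd j) (hjn : j < n) :
    a j * a (j + 1) = -(a (n + 1 - j) * a (n - j)) := by
  obtain ⟨m, rfl⟩ := hj
  obtain ⟨q, rfl⟩ := h4
  by_cases hlt : 2 * m + 1 < 4 * q / 2
  · exact hws _ ⟨m, rfl⟩ (by omega) hlt
  · -- `n / 2` is even, so the mirror index `n - j` is odd and lies below `n / 2`.
    have hmirror := hws (4 * q - (2 * m + 1)) ⟨2 * q - m - 1, by omega⟩ (by omega) (by omega)
    rw [show 4 * q - (2 * m + 1) + 1 = 4 * q + 1 - (2 * m + 1) by omega,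
      show 4 * q + 1 - (4 * q - (2 * m + 1)) = 2 * m + 1 + 1 by omega,
      show 4 * q - (4 * q - (2 * m + 1)) = 2 * m + 1 by omega] at hmirror
    linear_combination hmirror

theorem stmt_7 (n : ℕ) (a : ℕ → ℤ)
    (ha : ∀ j, 1 ≤ j → j ≤ n → a j = 1 ∨ a j = -1)
    -- `a` is weak symmetric:
    (h4 : 4 ∣ n)
    (hws : ∀ j, Odd j → 1 ≤ j → j < n / 2 →
      a j * a (j + 1) = -(a (n + 1 - j) * a (n - j))) :
    ∀ k, 1 ≤ k → k < n →
      (Even k → barkerT a n k = 0) ∧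
      (Odd k → barkerT a n k = a k * a (n + 1 - k)) := by
  have hsq : ∀ j, 1 ≤ j → j ≤ n → a j * a j = 1 := fun j h1 h2 => by
    rcases ha j h1 h2 with h | h <;> simp [h]
  have hpair : ∀ j < n / 2, a (2 * j + 1) * a (n + 1 - (2 * j + 1)) +
      a (2 * j + 2) * a (n + 1 - (2 * j + 2)) = 0 := fun j hj => by
    rw [show n + 1 - (2 * j + 2) = n - (2 * j + 1) by omega]
    exact mul_add_mul_eq_zero_of_mul_eq_neg (hsq _ (by omega) (by omega))
      (hsq _ (by omega) (by omega)) (weakSymm_of_odd_lt h4 hws ⟨j, rfl⟩ (by omega))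
  intro k _ hkn
  constructor
  · rintro ⟨i, rfl⟩
    rw [barkerT, ← two_mul]
    exact sum_Icc_one_two_mul_eq_zero _ i fun j hj => hpair j (by omega)
  · rintro ⟨i, rfl⟩
    rw [barkerT, sum_Icc_succ_top (by omega),
      sum_Icc_one_two_mul_eq_zero _ i fun j hj => hpair j (by omega), zero_add]
end

section
/- Let a be a binary sequence of length n > 1 and let 1 ≤ k < n with k even. Then C_{n−k}(a) = Σ_{j=1}^{k/2} a_j a_{k+1−j} (δ_j + δ_{k+1−j}), where δ_i = a_i a_{n+1−i}. -/
/-- `δ_i = a_i a_{n+1-i}`. -/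
def barkerDelta (a : ℕ → ℤ) (n i : ℕ) : ℤ := a i * a (n + 1 - i)

/-!
Write `C_{n-k}(a) = ∑_{j=1}^{k} a_j a_{j+n-k}` and pair the term `j` with the term `k+1-j`.
Multiplying the pair by `a_j a_{k+1-j}` and using `a_i² = 1` turns
`a_j a_{j+n-k} + a_{k+1-j} a_{n+1-j}` into `a_j a_{k+1-j} (δ_j + δ_{k+1-j})`.
-/

open Finset

theorem Finset.sum_Icc_one_eq_sum_Icc_half_add_reflect {M : Type*} [AddCommMonoid M]
    (f : ℕ → M) {k : ℕ} (hk : Even k) :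
    ∑ j ∈ Icc 1 k, f j = ∑ j ∈ Icc 1 (k / 2), (f j + f (k + 1 - j)) := by
  obtain ⟨m, rfl⟩ := hk
  have hupper : ∑ j ∈ Ioc m (m + m), f j = ∑ j ∈ Icc 1 m, f (m + m + 1 - j) :=
    sum_nbij' (fun j => m + m + 1 - j) (fun j => m + m + 1 - j)
      (fun j hj => by simp only [mem_Ioc, mem_Icc] at *; omega)
      (fun j hj => by simp only [mem_Ioc, mem_Icc] at *; omega)
      (fun j hj => by simp only [mem_Ioc] at hj; omega)
      (fun j hj => by simp only [mem_Icc] at hj; omega)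
      (fun j hj => by simp only [mem_Ioc] at hj; rw [show m + m + 1 - (m + m + 1 - j) = j by omega])
  have hIcc : ∀ x, Icc 1 x = Ioc 0 x := Icc_add_one_left_eq_Ioc 0
  rw [show (m + m) / 2 = m by omega, sum_add_distrib, ← hupper, hIcc, hIcc,
    sum_Ioc_consecutive _ (Nat.zero_le m) (Nat.le_add_right m m)]

theorem aperiodicCorr_sub {a : ℕ → ℤ} {n k : ℕ} (hk : k ≤ n) :
    aperiodicCorr a n (n - k) = ∑ j ∈ Icc 1 k, a j * a (j + (n - k)) := by
  rw [aperiodicCorr, Nat.sub_sub_self hk]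

theorem stmt_11_general (n : ℕ) (a : ℕ → ℤ)
    (ha : ∀ j, 1 ≤ j → j ≤ n → a j = 1 ∨ a j = -1)
    (k : ℕ) (hkn : k < n) (hke : Even k) :
    aperiodicCorr a n (n - k) =
      ∑ j ∈ Finset.Icc 1 (k / 2),
        a j * a (k + 1 - j) * (barkerDelta a n j + barkerDelta a n (k + 1 - j)) := by
  rw [aperiodicCorr_sub hkn.le, sum_Icc_one_eq_sum_Icc_half_add_reflect _ hke]
  refine sum_congr rfl fun j hj => ?_
  have hj' : 1 ≤ j ∧ j ≤ k / 2 := mem_Icc.mp hj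
  have hsq : ∀ i, 1 ≤ i → i ≤ k → a i * a i = 1 :=
    fun i hi hik => mul_self_eq_one_iff.mpr (ha i hi (by omega))
  rw [barkerDelta, barkerDelta, show k + 1 - j + (n - k) = n + 1 - j by omega,
    show n + 1 - (k + 1 - j) = j + (n - k) by omega]
  linear_combination (-(a (k + 1 - j) * a (n + 1 - j))) * hsq j hj'.1 (by omega) -
    (a j * a (j + (n - k))) * hsq (k + 1 - j) (by omega) (by omega)

theorem stmt_11 (n : ℕ) (hn : 1 < n) (a : ℕ → ℤ)
    (ha : ∀ j, 1 ≤ j → j ≤ n → a j = 1 ∨ a j = -1)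
    (k : ℕ) (hk1 : 1 ≤ k) (hkn : k < n) (hke : Even k) :
    aperiodicCorr a n (n - k) =
      ∑ j ∈ Finset.Icc 1 (k / 2),
        a j * a (k + 1 - j) * (barkerDelta a n j + barkerDelta a n (k + 1 - j)) :=
  stmt_11_general n a ha k hkn hke
end

section
/- Let a be a binary sequence of length n > 1 and let 1 ≤ k < n with k odd. Then C_{n−k}(a) = δ_{(k+1)/2} + Σ_{j=1}^{(k−1)/2} a_j a_{k+1−j} (δ_j + δ_{k+1−j}), where δ_i = a_i a_{n+1−i}. -/
theorem Finset.sum_Icc_two_mul_add_one_eq_middle_add_sum_pairs {M : Type*} [AddCommMonoid M]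
    (f : ℕ → M) (m : ℕ) :
    ∑ j ∈ Icc 1 (2 * m + 1), f j = f (m + 1) + ∑ j ∈ Icc 1 m, (f j + f (2 * m + 2 - j)) := by
  have hsplit : Icc 1 (2 * m + 1) = insert (m + 1) (Icc 1 m ∪ Icc (m + 2) (2 * m + 1)) := by
    ext x
    simp only [mem_Icc, mem_insert, mem_union]
    omega
  have hdisj : Disjoint (Icc 1 m) (Icc (m + 2) (2 * m + 1)) := by
    simp only [disjoint_left, mem_Icc]
    omega
  have hreflect : ∑ j ∈ Icc (m + 2) (2 * m + 1), f j = ∑ j ∈ Icc 1 m, f (2 * m + 2 - j) := by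
    apply sum_nbij' (fun j ↦ 2 * m + 2 - j) (fun j ↦ 2 * m + 2 - j) <;>
      simp only [mem_Icc] <;> intros <;> first | omega | (congr 1; omega)
  rw [hsplit, sum_insert (by simp), sum_union hdisj, hreflect, sum_add_distrib]

theorem aperiodicCorr_sub_eq_sum_mul_barkerDelta (a : ℕ → ℤ) {n k : ℕ} (hkn : k ≤ n)
    (ha : ∀ j ∈ Finset.Icc 1 k, a j * a j = 1) :
    aperiodicCorr a n (n - k) =
      ∑ j ∈ Finset.Icc 1 k, a j * a (k + 1 - j) * barkerDelta a n (k + 1 - j) := by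
  rw [aperiodicCorr, Nat.sub_sub_self hkn]
  refine Finset.sum_congr rfl fun j hj ↦ ?_
  rw [Finset.mem_Icc] at hj
  have hsq := ha (k + 1 - j) (Finset.mem_Icc.2 (by omega))
  rw [barkerDelta, show n + 1 - (k + 1 - j) = j + (n - k) by omega]
  linear_combination (-(a j * a (j + (n - k)))) * hsq

theorem stmt_12_general (n : ℕ) (a : ℕ → ℤ)
    (ha : ∀ j, 1 ≤ j → j ≤ n → a j = 1 ∨ a j = -1)
    (k : ℕ) (hkn : k < n) (hko : Odd k) :
    aperiodicCorr a n (n - k) =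
      barkerDelta a n ((k + 1) / 2) +
      ∑ j ∈ Finset.Icc 1 ((k - 1) / 2),
        a j * a (k + 1 - j) * (barkerDelta a n j + barkerDelta a n (k + 1 - j)) := by
  obtain ⟨m, rfl⟩ := hko
  have hsq : ∀ j ∈ Finset.Icc 1 (2 * m + 1), a j * a j = 1 := by
    intro j hj
    rw [Finset.mem_Icc] at hj
    rcases ha j hj.1 (by omega) with h | h <;> simp [h]
  rw [aperiodicCorr_sub_eq_sum_mul_barkerDelta a hkn.le hsq,
    Finset.sum_Icc_two_mul_add_one_eq_middle_add_sum_pairs,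
    show (2 * m + 1 + 1) / 2 = m + 1 by omega, show (2 * m + 1 - 1) / 2 = m by omega,
    show 2 * m + 1 + 1 - (m + 1) = m + 1 by omega,
    hsq (m + 1) (Finset.mem_Icc.2 (by omega)), one_mul]
  refine congrArg _ (Finset.sum_congr rfl fun j hj ↦ ?_)
  rw [Finset.mem_Icc] at hj
  rw [show 2 * m + 1 + 1 - (2 * m + 2 - j) = j by omega,
    show 2 * m + 2 - j = 2 * m + 1 + 1 - j by omega]
  ring

theorem stmt_12 (n : ℕ) (hn : 1 < n) (a : ℕ → ℤ)
    (ha : ∀ j, 1 ≤ j → j ≤ n → a j = 1 ∨ a j = -1)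
    (k : ℕ) (hk1 : 1 ≤ k) (hkn : k < n) (hko : Odd k) :
    aperiodicCorr a n (n - k) =
      barkerDelta a n ((k + 1) / 2) +
      ∑ j ∈ Finset.Icc 1 ((k - 1) / 2),
        a j * a (k + 1 - j) * (barkerDelta a n j + barkerDelta a n (k + 1 - j)) :=
  stmt_12_general n a ha k hkn hko
end

section
/- Let a be a binary sequence of even length n = 2m and let 1 ≤ k < m with k even. Then C_k(a) = Σ_{j=1}^{m−k} a_j a_{j+k} (1 + δ_j δ_{j+k}) + Σ_{j=1}^{k/2} a_{j+m−k} a_{m+1−j} (δ_{j+m−k} + δ_{m+1−j}), where δ_i = a_i a_{n+1−i}. -/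
open Finset

namespace Finset

variable {M : Type*} [AddCommMonoid M]

theorem sum_Icc_one_add (g : ℕ → M) (A B : ℕ) :
    ∑ j ∈ Icc 1 (A + B), g j = ∑ j ∈ Icc 1 A, g j + ∑ j ∈ Icc 1 B, g (j + A) := by
  induction B with
  | zero => simp
  | succ B ih =>
    rw [← add_assoc, sum_Icc_succ_top (by omega), ih, sum_Icc_succ_top (by omega), add_assoc]
    congr 2
    exact congrArg g (by omega)

theorem sum_Icc_one_two_mul (g : ℕ → M) (N : ℕ) :
    ∑ j ∈ Icc 1 (2 * N), g j = ∑ j ∈ Icc 1 N, (g j + g (2 * N + 1 - j)) := by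
  rw [two_mul, sum_Icc_one_add, sum_add_distrib]
  congr 1
  refine sum_nbij' (fun j => N + 1 - j) (fun j => N + 1 - j) ?_ ?_ ?_ ?_ ?_ <;>
    intro j hj <;> simp only [mem_Icc] at hj ⊢ <;> first | omega | congr 1; omega

end Finset

section Identities

variable {R : Type*} [CommRing R] {x y : R}

theorem mul_mul_one_add_mul_mul_of_mul_self_eq_one (u v : R) (hx : x * x = 1) (hy : y * y = 1) :
    x * y * (1 + x * u * (y * v)) = x * y + v * u := by
  linear_combination (y * y * u * v) * hx + (u * v) * hy

theorem mul_mul_add_mul_of_mul_self_eq_one (u v : R) (hx : x * x = 1) (hy : y * y = 1) :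
    x * y * (x * u + y * v) = x * v + y * u := by
  linear_combination (u * y) * hx + (x * v) * hy

end Identities

section PairedSummands

variable {a : ℕ → ℤ} {n k p q : ℕ}

theorem corr_summand_one_add_barkerDelta (hpq : p + q + k = n + 1) (hp : a p * a p = 1)
    (hpk : a (p + k) * a (p + k) = 1) :
    a p * a (p + k) * (1 + barkerDelta a n p * barkerDelta a n (p + k)) =
      a p * a (p + k) + a q * a (q + k) := by
  rw [barkerDelta, barkerDelta, show n + 1 - p = q + k by omega, show n + 1 - (p + k) = q by omega]
  exact mul_mul_one_add_mul_mul_of_mul_self_eq_one _ _ hp hpk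

theorem corr_summand_barkerDelta_add (hpq : p + q + k = n + 1) (hp : a p * a p = 1)
    (hq : a q * a q = 1) :
    a p * a q * (barkerDelta a n p + barkerDelta a n q) = a p * a (p + k) + a q * a (q + k) := by
  rw [barkerDelta, barkerDelta, show n + 1 - p = q + k by omega, show n + 1 - q = p + k by omega]
  exact mul_mul_add_mul_of_mul_self_eq_one _ _ hp hq

end PairedSummands

theorem stmt_13_general (n m : ℕ) (hnm : n = 2 * m) (a : ℕ → ℤ)
    (ha : ∀ j, 1 ≤ j → j ≤ n → a j = 1 ∨ a j = -1)
    (k : ℕ) (hkm : k < m) (hke : Even k) :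
    aperiodicCorr a n k =
      (∑ j ∈ Finset.Icc 1 (m - k),
        a j * a (j + k) * (1 + barkerDelta a n j * barkerDelta a n (j + k))) +
      ∑ j ∈ Finset.Icc 1 (k / 2),
        a (j + m - k) * a (m + 1 - j) *
          (barkerDelta a n (j + m - k) + barkerDelta a n (m + 1 - j)) := by
  have hsq : ∀ i, 1 ≤ i → i ≤ n → a i * a i = 1 := fun i h1 h2 => by
    rcases ha i h1 h2 with h | h <;> simp [h]
  obtain ⟨t, rfl⟩ := hke
  rw [aperiodicCorr, show n - (t + t) = 2 * (m - t) by omega, sum_Icc_one_two_mul,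
    show m - t = (m - (t + t)) + t by omega, sum_Icc_one_add, show (t + t) / 2 = t by omega]
  congr 1
  · refine sum_congr rfl fun j hj => ?_
    rw [mem_Icc] at hj
    refine (corr_summand_one_add_barkerDelta ?_ (hsq _ ?_ ?_) (hsq _ ?_ ?_)).symm <;> omega
  · refine sum_congr rfl fun j hj => ?_
    rw [mem_Icc] at hj
    rw [show j + m - (t + t) = j + (m - (t + t)) by omega,
      show 2 * (m - (t + t) + t) + 1 - (j + (m - (t + t))) = m + 1 - j by omega]
    refine (corr_summand_barkerDelta_add ?_ (hsq _ ?_ ?_) (hsq _ ?_ ?_)).symm <;> omega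

theorem stmt_13 (n m : ℕ) (hm : 1 ≤ m) (hnm : n = 2 * m) (a : ℕ → ℤ)
    (ha : ∀ j, 1 ≤ j → j ≤ n → a j = 1 ∨ a j = -1)
    (k : ℕ) (hk1 : 1 ≤ k) (hkm : k < m) (hke : Even k) :
    aperiodicCorr a n k =
      (∑ j ∈ Finset.Icc 1 (m - k),
        a j * a (j + k) * (1 + barkerDelta a n j * barkerDelta a n (j + k))) +
      ∑ j ∈ Finset.Icc 1 (k / 2),
        a (j + m - k) * a (m + 1 - j) *
          (barkerDelta a n (j + m - k) + barkerDelta a n (m + 1 - j)) :=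
  stmt_13_general n m hnm a ha k hkm hke
end

section
/- Let a be a strong symmetric binary sequence of length n = 2m, and let b be the binary sequence of length m with b_j = a_j for 1 ≤ j ≤ m. If k is even with 1 ≤ k < n, then C_k(a) = 2 C_k(b) when k < m, and C_k(a) = 0 when k ≥ m. -/
open Finset

section Reflection

variable {M : Type*}

theorem sum_Ioc_reflect [AddCommMonoid M] (f : ℕ → M) {L R N : ℕ} (hR : R ≤ N) :
    ∑ j ∈ Ioc L R, f (N + 1 - j) = ∑ j ∈ Ioc (N - R) (N - L), f j := by
  refine sum_nbij' (fun j => N + 1 - j) (fun j => N + 1 - j) ?_ ?_ ?_ ?_ (fun _ _ => rfl) <;>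
    intro j hj <;> simp only [mem_Ioc] at hj ⊢ <;> omega

theorem sum_Ioc_eq_zero_of_reflect_eq_neg [AddCommGroup M] [IsAddTorsionFree M] (f : ℕ → M)
    {L R : ℕ} (h : ∀ j ∈ Ioc L R, f (L + R + 1 - j) = -f j) : ∑ j ∈ Ioc L R, f j = 0 := by
  refine self_eq_neg.mp ?_
  calc ∑ j ∈ Ioc L R, f j
      = ∑ j ∈ Ioc L R, f (L + R + 1 - j) := by
        rw [sum_Ioc_reflect f (Nat.le_add_left R L), Nat.add_sub_cancel, Nat.add_sub_cancel_left]
    _ = -∑ j ∈ Ioc L R, f j := by rw [sum_congr rfl h, sum_neg_distrib]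

end Reflection

theorem aperiodicCorr_eq_sum_Ioc (a : ℕ → ℤ) (n k : ℕ) :
    aperiodicCorr a n k = ∑ j ∈ Ioc 0 (n - k), a j * a (j + k) := by
  rw [aperiodicCorr, ← Icc_add_one_left_eq_Ioc, zero_add]

section StrongSymmetric

variable {a : ℕ → ℤ} {m k : ℕ}
  (hrefl : ∀ j, 1 ≤ j → j ≤ m → a (2 * m + 1 - j) = (-1) ^ j * a j)
include hrefl

theorem mul_shift_reflect_eq (hk : Even k) {j : ℕ} (hj : 1 ≤ j) (hjk : j + k ≤ m) :
    a (2 * m - k + 1 - j) * a (2 * m - k + 1 - j + k) = a j * a (j + k) := by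
  rw [show 2 * m - k + 1 - j = 2 * m + 1 - (j + k) by omega,
    show 2 * m + 1 - (j + k) + k = 2 * m + 1 - j by omega,
    hrefl (j + k) (by omega) hjk, hrefl j hj (by omega),
    neg_one_pow_congr (m := j + k) (n := j) (by rw [Nat.even_add]; tauto)]
  have hsq : (-1 : ℤ) ^ j * (-1) ^ j = 1 := by rw [← mul_pow]; norm_num
  linear_combination (a j * a (j + k)) * hsq

theorem mul_shift_reflect_eq_neg (hk : Even k) {j : ℕ} (hj : 1 ≤ j) (hjm : j ≤ m)
    (hmjk : m < j + k) (hjkm : j + k ≤ 2 * m) :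
    a (2 * m - k + 1 - j) * a (2 * m - k + 1 - j + k) = -(a j * a (j + k)) := by
  set i := 2 * m + 1 - (j + k) with hi
  have hsign : (-1 : ℤ) ^ i = -(-1) ^ j := by
    rw [← (pow_succ (-1 : ℤ) j).trans (mul_neg_one _)]
    refine neg_one_pow_congr ?_
    simp only [Nat.even_iff] at hk ⊢
    omega
  rw [show 2 * m - k + 1 - j = i by omega, show i + k = 2 * m + 1 - j by omega,
    show j + k = 2 * m + 1 - i by omega, hrefl j hj hjm, hrefl i (by omega) (by omega), hsign]
  ring

theorem aperiodicCorr_eq_zero_of_le (hk : Even k) (hmk : m ≤ k) :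
    aperiodicCorr a (2 * m) k = 0 := by
  rw [aperiodicCorr_eq_sum_Ioc]
  refine sum_Ioc_eq_zero_of_reflect_eq_neg _ fun j hj => ?_
  rw [mem_Ioc] at hj
  rw [zero_add]
  exact mul_shift_reflect_eq_neg hrefl hk hj.1 (by omega) (by omega) (by omega)

theorem aperiodicCorr_eq_two_mul (hk : Even k) (hkm : k < m) :
    aperiodicCorr a (2 * m) k = 2 * ∑ j ∈ Ioc 0 (m - k), a j * a (j + k) := by
  have hstraddle : ∑ j ∈ Ioc (m - k) m, a j * a (j + k) = 0 := by
    refine sum_Ioc_eq_zero_of_reflect_eq_neg _ fun j hj => ?_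
    rw [mem_Ioc] at hj
    rw [show m - k + m + 1 - j = 2 * m - k + 1 - j by omega]
    exact mul_shift_reflect_eq_neg hrefl hk (by omega) hj.2 (by omega) (by omega)
  have hsecond : ∑ j ∈ Ioc m (2 * m - k), a j * a (j + k)
      = ∑ j ∈ Ioc 0 (m - k), a j * a (j + k) := by
    calc ∑ j ∈ Ioc m (2 * m - k), a j * a (j + k)
        = ∑ j ∈ Ioc 0 (m - k), a (2 * m - k + 1 - j) * a (2 * m - k + 1 - j + k) := by
          rw [sum_Ioc_reflect (fun j => a j * a (j + k)) (by omega),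
            show 2 * m - k - (m - k) = m by omega, Nat.sub_zero]
      _ = ∑ j ∈ Ioc 0 (m - k), a j * a (j + k) := sum_congr rfl fun j hj =>
          mul_shift_reflect_eq hrefl hk (mem_Ioc.mp hj).1 (by have := (mem_Ioc.mp hj).2; omega)
  rw [aperiodicCorr_eq_sum_Ioc,
    ← sum_Ioc_consecutive _ (Nat.zero_le (m - k)) (by omega : m - k ≤ 2 * m - k),
    ← sum_Ioc_consecutive _ (by omega : m - k ≤ m) (by omega : m ≤ 2 * m - k),
    hstraddle, hsecond]
  ring

end StrongSymmetric

theorem stmt_15_general (n m : ℕ) (hnm : n = 2 * m) (a : ℕ → ℤ)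
    (ha : ∀ j, 1 ≤ j → j ≤ n → a j = 1 ∨ a j = -1)
    -- `a` is strong symmetric:
    (hss : ∀ j, 1 ≤ j → j ≤ n / 2 → a j * a (n + 1 - j) = (-1 : ℤ) ^ j)
    -- `b` is the first half of `a`:
    (b : ℕ → ℤ) (hb : ∀ j, 1 ≤ j → j ≤ m → b j = a j)
    (k : ℕ) (hke : Even k) :
    (k < m → aperiodicCorr a n k = 2 * aperiodicCorr b m k) ∧
    (m ≤ k → aperiodicCorr a n k = 0) := by
  subst hnm
  have hrefl : ∀ j, 1 ≤ j → j ≤ m → a (2 * m + 1 - j) = (-1) ^ j * a j := by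
    intro j hj hjm
    have hs := hss j hj (by omega)
    rcases ha j hj (by omega) with h | h <;> rw [h] at hs ⊢ <;> linarith
  refine ⟨fun hkm => ?_, aperiodicCorr_eq_zero_of_le hrefl hke⟩
  rw [aperiodicCorr_eq_two_mul hrefl hke hkm, aperiodicCorr_eq_sum_Ioc b]
  congr 1
  refine sum_congr rfl fun j hj => ?_
  rw [mem_Ioc] at hj
  rw [hb j (by omega) (by omega), hb (j + k) (by omega) (by omega)]

theorem stmt_15 (n m : ℕ) (hm : 1 ≤ m) (hnm : n = 2 * m) (a : ℕ → ℤ)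
    (ha : ∀ j, 1 ≤ j → j ≤ n → a j = 1 ∨ a j = -1)
    -- `a` is strong symmetric:
    (h4 : 4 ∣ n)
    (hss : ∀ j, 1 ≤ j → j ≤ n / 2 → a j * a (n + 1 - j) = (-1 : ℤ) ^ j)
    -- `b` is the first half of `a`:
    (b : ℕ → ℤ) (hb : ∀ j, 1 ≤ j → j ≤ m → b j = a j)
    (k : ℕ) (hk1 : 1 ≤ k) (hkn : k < n) (hke : Even k) :
    (k < m → aperiodicCorr a n k = 2 * aperiodicCorr b m k) ∧
    (m ≤ k → aperiodicCorr a n k = 0) :=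
  stmt_15_general n m hnm a ha hss b hb k hke
end

section
/- Let a be a strong symmetric binary sequence of length n = 2m. If k is odd with 1 ≤ k < m, then C_k(a) = (−1)^{(k−1)/2} − 2 Σ_{j=1}^{(k−1)/2} (−1)^j a_{j+m−k} a_{m+1−j}. -/
/-!
The reflection `j ↦ n + 1 - k - j` is an involution of the summation range `[1, n - k]` of
`C_k(a)` with the single fixed point `c = m - (k - 1) / 2`. By strong symmetry it sends the term
`a_j a_{j+k}` to its negative, except when `j ≤ m < j + k`, where the term is preserved. Hence the
terms cancel in pairs except the straddling ones, which double up; the fixed point contributes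
`(-1)^c = (-1)^((k-1)/2)`, and strong symmetry once more turns the straddling terms with `j < c`
into the terms of the stated sum.
-/

open Finset

lemma sum_Icc_one_two_mul_sub_one_eq {M : Type*} [AddCommMonoid M] (f : ℕ → M) {c : ℕ}
    (hc : 1 ≤ c) :
    ∑ j ∈ Icc 1 (2 * c - 1), f j = f c + ∑ j ∈ Ico 1 c, (f j + f (2 * c - j)) := by
  have hIcc : Icc 1 (2 * c - 1) = Ico 1 (2 * c) := by ext; simp only [mem_Icc, mem_Ico]; omega
  have hreflect : ∑ j ∈ Ico 1 c, f (2 * c - j) = ∑ j ∈ Ico (c + 1) (2 * c), f j := by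
    rw [sum_Ico_reflect f 1 (by omega)]
    congr 2; omega
  rw [hIcc, ← sum_Ico_consecutive f hc (by omega : c ≤ 2 * c),
    sum_eq_sum_Ico_succ_bot (by omega : c < 2 * c), sum_add_distrib, hreflect]
  abel

lemma neg_one_pow_mul_self (j : ℕ) : (-1 : ℤ) ^ j * (-1) ^ j = 1 := by
  rw [← pow_add]; exact Even.neg_one_pow ⟨j, rfl⟩

section StrongSymmetric

variable {m : ℕ} {a : ℕ → ℤ}

lemma reflect_eq_of_mul_eq {j : ℕ} (ha : a j = 1 ∨ a j = -1)
    (hss : a j * a (2 * m + 1 - j) = (-1) ^ j) : a (2 * m + 1 - j) = (-1) ^ j * a j := by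
  rcases ha with h | h <;> rw [h] at hss ⊢ <;> linarith

lemma reflect_eq_of_lt (hR : ∀ j, 1 ≤ j → j ≤ m → a (2 * m + 1 - j) = (-1) ^ j * a j)
    {i : ℕ} (hmi : m < i) (hi : i ≤ 2 * m) : a (2 * m + 1 - i) = -(-1) ^ i * a i := by
  have h := hR (2 * m + 1 - i) (by omega) (by omega)
  rw [show 2 * m + 1 - (2 * m + 1 - i) = i by omega] at h
  have hsign : (-1 : ℤ) ^ (2 * m + 1 - i) = -(-1) ^ i := by
    rw [← neg_one_mul ((-1 : ℤ) ^ i), ← pow_succ']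
    exact neg_one_pow_congr (by simp only [Nat.even_iff]; omega)
  rw [h, ← hsign, ← mul_assoc, neg_one_pow_mul_self, one_mul]

lemma corr_term_reflect_of_add_le
    (hR : ∀ j, 1 ≤ j → j ≤ m → a (2 * m + 1 - j) = (-1) ^ j * a j)
    {j k : ℕ} (hj : 1 ≤ j) (hjk : j + k ≤ m) :
    a (2 * m + 1 - (j + k)) * a (2 * m + 1 - j) = (-1) ^ k * (a j * a (j + k)) := by
  rw [hR (j + k) (by omega) hjk, hR j hj (by omega), pow_add]
  linear_combination (-1 : ℤ) ^ k * a j * a (j + k) * neg_one_pow_mul_self j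

lemma corr_term_reflect_of_lt_add
    (hR : ∀ j, 1 ≤ j → j ≤ m → a (2 * m + 1 - j) = (-1) ^ j * a j)
    {j k : ℕ} (hj : 1 ≤ j) (hjm : j ≤ m) (hmjk : m < j + k) (hjk : j + k ≤ 2 * m) :
    a (2 * m + 1 - (j + k)) * a (2 * m + 1 - j) = -(-1) ^ k * (a j * a (j + k)) := by
  rw [reflect_eq_of_lt hR hmjk hjk, hR j hj hjm, pow_add]
  linear_combination -(-1 : ℤ) ^ k * a j * a (j + k) * neg_one_pow_mul_self j

lemma sum_corr_term_add_reflect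
    (hR : ∀ j, 1 ≤ j → j ≤ m → a (2 * m + 1 - j) = (-1) ^ j * a j) {K : ℕ} (hK : 2 * K + 1 < m) :
    ∑ j ∈ Ico 1 (m - K),
        (a j * a (j + (2 * K + 1)) + a (2 * (m - K) - j) * a (2 * (m - K) - j + (2 * K + 1))) =
      2 * ∑ j ∈ Ico (m - 2 * K) (m - K), a j * a (j + (2 * K + 1)) := by
  have hk_odd : (-1 : ℤ) ^ (2 * K + 1) = -1 := Odd.neg_one_pow ⟨K, rfl⟩
  rw [← sum_Ico_consecutive _ (by omega : 1 ≤ m - 2 * K) (by omega : m - 2 * K ≤ m - K), mul_sum]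
  have houter : ∀ j ∈ Ico 1 (m - 2 * K), a j * a (j + (2 * K + 1)) +
      a (2 * (m - K) - j) * a (2 * (m - K) - j + (2 * K + 1)) = 0 := by
    intro j hj
    rw [mem_Ico] at hj
    rw [show 2 * (m - K) - j + (2 * K + 1) = 2 * m + 1 - j by omega,
      show 2 * (m - K) - j = 2 * m + 1 - (j + (2 * K + 1)) by omega,
      corr_term_reflect_of_add_le hR hj.1 (by omega), hk_odd]
    ring
  have hinner : ∀ j ∈ Ico (m - 2 * K) (m - K), a j * a (j + (2 * K + 1)) +
      a (2 * (m - K) - j) * a (2 * (m - K) - j + (2 * K + 1)) = 2 * (a j * a (j + (2 * K + 1))) := by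
    intro j hj
    rw [mem_Ico] at hj
    rw [show 2 * (m - K) - j + (2 * K + 1) = 2 * m + 1 - j by omega,
      show 2 * (m - K) - j = 2 * m + 1 - (j + (2 * K + 1)) by omega,
      corr_term_reflect_of_lt_add hR (by omega) (by omega) (by omega) (by omega), hk_odd]
    ring
  rw [sum_eq_zero houter, sum_congr rfl hinner, zero_add]

lemma sum_corr_term_straddle_eq
    (hR : ∀ j, 1 ≤ j → j ≤ m → a (2 * m + 1 - j) = (-1) ^ j * a j) (hm : Even m)
    {K : ℕ} (hK : 2 * K + 1 < m) :
    ∑ j ∈ Ico (m - 2 * K) (m - K), a j * a (j + (2 * K + 1)) =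
      -∑ i ∈ Icc 1 K, (-1) ^ i * (a (i + m - (2 * K + 1)) * a (m + 1 - i)) := by
  rw [← sum_neg_distrib]
  refine (sum_nbij' (· + m - (2 * K + 1)) (· + (2 * K + 1) - m) ?_ ?_ ?_ ?_ ?_).symm
  · intro i hi; simp only [mem_Icc, mem_Ico] at hi ⊢; omega
  · intro j hj; simp only [mem_Icc, mem_Ico] at hj ⊢; omega
  · intro i hi; simp only [mem_Icc] at hi; omega
  · intro j hj; simp only [mem_Ico] at hj; omega
  · intro i hi
    simp only [mem_Icc] at hi
    have hsign : (-1 : ℤ) ^ (m + 1 - i) = -(-1) ^ i := by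
      rw [← neg_one_mul ((-1 : ℤ) ^ i), ← pow_succ']
      exact neg_one_pow_congr (by obtain ⟨r, hr⟩ := hm; simp only [Nat.even_iff]; omega)
    rw [show i + m - (2 * K + 1) + (2 * K + 1) = 2 * m + 1 - (m + 1 - i) by omega,
      hR _ (by omega) (by omega), hsign]
    ring

end StrongSymmetric

theorem stmt_17_general (n m : ℕ) (hnm : n = 2 * m) (a : ℕ → ℤ)
    (ha : ∀ j, 1 ≤ j → j ≤ n → a j = 1 ∨ a j = -1)
    -- `a` is strong symmetric:
    (h4 : 4 ∣ n)
    (hss : ∀ j, 1 ≤ j → j ≤ n / 2 → a j * a (n + 1 - j) = (-1 : ℤ) ^ j)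
    (k : ℕ) (hkm : k < m) (hko : Odd k) :
    aperiodicCorr a n k =
      (-1 : ℤ) ^ ((k - 1) / 2) -
      2 * ∑ j ∈ Finset.Icc 1 ((k - 1) / 2),
        (-1 : ℤ) ^ j * (a (j + m - k) * a (m + 1 - j)) := by
  subst hnm
  obtain ⟨K, rfl⟩ := hko
  have hm : Even m := by obtain ⟨r, hr⟩ := h4; exact ⟨r, by omega⟩
  have hR : ∀ j, 1 ≤ j → j ≤ m → a (2 * m + 1 - j) = (-1) ^ j * a j := fun j h1 h2 =>
    reflect_eq_of_mul_eq (ha j h1 (by omega)) (hss j h1 (by omega))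
  have hcenter : a (m - K) * a (m - K + (2 * K + 1)) = (-1) ^ K := by
    rw [show m - K + (2 * K + 1) = 2 * m + 1 - (m - K) by omega, hR _ (by omega) (by omega),
      neg_one_pow_congr (n := K) (by obtain ⟨r, hr⟩ := hm; simp only [Nat.even_iff]; omega)]
    rcases ha (m - K) (by omega) (by omega) with h | h <;> rw [h] <;> ring
  rw [aperiodicCorr, show 2 * m - (2 * K + 1) = 2 * (m - K) - 1 by omega,
    sum_Icc_one_two_mul_sub_one_eq (fun j => a j * a (j + (2 * K + 1))) (by omega), hcenter,
    sum_corr_term_add_reflect hR hkm, sum_corr_term_straddle_eq hR hm hkm,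
    show (2 * K + 1 - 1) / 2 = K by omega]
  ring

theorem stmt_17 (n m : ℕ) (hm : 1 ≤ m) (hnm : n = 2 * m) (a : ℕ → ℤ)
    (ha : ∀ j, 1 ≤ j → j ≤ n → a j = 1 ∨ a j = -1)
    -- `a` is strong symmetric:
    (h4 : 4 ∣ n)
    (hss : ∀ j, 1 ≤ j → j ≤ n / 2 → a j * a (n + 1 - j) = (-1 : ℤ) ^ j)
    (k : ℕ) (hk1 : 1 ≤ k) (hkm : k < m) (hko : Odd k) :
    aperiodicCorr a n k =
      (-1 : ℤ) ^ ((k - 1) / 2) -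
      2 * ∑ j ∈ Finset.Icc 1 ((k - 1) / 2),
        (-1 : ℤ) ^ j * (a (j + m - k) * a (m + 1 - j)) :=
  stmt_17_general n m hnm a ha h4 hss k hkm hko
end

section
/- Let a and p be strong symmetric binary sequences of length n = 2m such that p_j = a_{m+1−j} for each 1 ≤ j ≤ m. Then for each 1 ≤ k < n: C_k(p) = C_k(a) if k is even, and C_k(p) = −C_{n−k}(a) if k is odd. -/
/-!
Cut `[1, 2m]` into halves. Strong symmetry makes the upper half of each sequence the reversed
lower half with alternating signs, and the lower half of `p` is the reversed lower half `x` of `a`;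
since reversal preserves and alternation multiplies `C_k` by `(-1)^k`, the contributions of the
two halves to `C_k` add up to `(1 + (-1)^k) C_k(x)` for both `a` and `p`. For even `k` the pairs
straddling the midpoint cancel under `j ↦ 2m + 1 - k - j`; for odd `k` the shift `j ↦ j + k - m`
matches the straddling pairs of `p` at lag `k` with those of `a` at lag `2m - k`, with opposite
signs because `m` is even.
-/

open Finset

namespace aperiodicCorr

lemma congr {a b : ℕ → ℤ} {n : ℕ} (k : ℕ) (h : ∀ j, 1 ≤ j → j ≤ n → a j = b j) :
    aperiodicCorr a n k = aperiodicCorr b n k := by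
  refine sum_congr rfl fun j hj => ?_
  rw [mem_Icc] at hj
  rw [h j hj.1 (by omega), h (j + k) (by omega) (by omega)]

lemma reflect (a : ℕ → ℤ) (n k : ℕ) :
    aperiodicCorr (fun j => a (n + 1 - j)) n k = aperiodicCorr a n k := by
  refine sum_nbij' (fun j => n + 1 - k - j) (fun j => n + 1 - k - j) ?_ ?_ ?_ ?_ ?_
  all_goals intro j hj; rw [mem_Icc] at hj
  · rw [mem_Icc]; omega
  · rw [mem_Icc]; omega
  · omega
  · omega
  · dsimp only
    rw [show n + 1 - k - j + k = n + 1 - j by omega,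
      show n + 1 - (j + k) = n + 1 - k - j by omega, mul_comm]

lemma neg_one_pow_mul (a : ℕ → ℤ) (n k c : ℕ) :
    aperiodicCorr (fun j => (-1) ^ (c + j) * a j) n k = (-1) ^ k * aperiodicCorr a n k := by
  rw [aperiodicCorr, aperiodicCorr, mul_sum]
  refine sum_congr rfl fun j _ => ?_
  have hsq : ((-1 : ℤ) ^ (c + j)) * (-1) ^ (c + j) = 1 := by
    rw [← pow_add]; exact Even.neg_one_pow ⟨_, rfl⟩
  rw [← add_assoc, pow_add]
  linear_combination (-1) ^ k * a j * a (j + k) * hsq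

end aperiodicCorr

/-- The terms of `aperiodicCorr a (2 * m) k` with `j ≤ m < j + k`. -/
def crossCorr (a : ℕ → ℤ) (m k : ℕ) : ℤ :=
  ∑ j ∈ Ioc (m - k) (min m (2 * m - k)), a j * a (j + k)

lemma aperiodicCorr_two_mul (a : ℕ → ℤ) (m k : ℕ) :
    aperiodicCorr a (2 * m) k =
      aperiodicCorr a m k + aperiodicCorr (fun i => a (m + i)) m k + crossCorr a m k := by
  have hIcc : ∀ x, Icc 1 x = Ioc 0 x := fun x => by ext; simp only [mem_Icc, mem_Ioc]; omega
  have hupper : aperiodicCorr (fun i => a (m + i)) m k =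
      ∑ j ∈ Ioc (min m (2 * m - k)) (2 * m - k), a j * a (j + k) := by
    have : Ioc (min m (2 * m - k)) (2 * m - k) = (Icc 1 (m - k)).map (addLeftEmbedding m) := by
      rw [map_add_left_Icc]; ext; simp only [mem_Icc, mem_Ioc]; omega
    simp only [this, sum_map, addLeftEmbedding_apply, aperiodicCorr, add_assoc]
  rw [hupper, crossCorr, aperiodicCorr, aperiodicCorr, hIcc, hIcc, add_right_comm,
    sum_Ioc_consecutive _ (Nat.zero_le _) (by omega : m - k ≤ min m (2 * m - k)),
    sum_Ioc_consecutive _ (Nat.zero_le _) (min_le_right _ _)]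

lemma eq_neg_one_pow_mul_of_strongSymm {a : ℕ → ℤ} {m : ℕ}
    (ha : ∀ j, 1 ≤ j → j ≤ m → a j = 1 ∨ a j = -1)
    (hss : ∀ j, 1 ≤ j → j ≤ m → a j * a (2 * m + 1 - j) = (-1) ^ j)
    {i : ℕ} (hmi : m < i) (hi : i ≤ 2 * m) : a i = (-1) ^ (i + 1) * a (2 * m + 1 - i) := by
  have hsym := hss (2 * m + 1 - i) (by omega) (by omega)
  rw [show 2 * m + 1 - (2 * m + 1 - i) = i by omega] at hsym
  have hsq := mul_self_eq_one_iff.mpr (ha (2 * m + 1 - i) (by omega) (by omega))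
  rw [neg_one_pow_congr (by simp only [Nat.even_iff]; omega :
    Even (i + 1) ↔ Even (2 * m + 1 - i)), ← hsym]
  linear_combination (-a i) * hsq

section Reflection

variable {a : ℕ → ℤ} {m : ℕ}

lemma aperiodicCorr_upper_half
    (hrefl : ∀ i, m < i → i ≤ 2 * m → a i = (-1) ^ (i + 1) * a (2 * m + 1 - i)) (k : ℕ) :
    aperiodicCorr (fun i => a (m + i)) m k = (-1) ^ k * aperiodicCorr a m k := by
  rw [aperiodicCorr.congr k (b := fun i => (-1) ^ (m + 1 + i) * a (m + 1 - i)) fun i h1 h2 => ?_,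
    aperiodicCorr.neg_one_pow_mul, aperiodicCorr.reflect a]
  rw [hrefl (m + i) (by omega) (by omega), show 2 * m + 1 - (m + i) = m + 1 - i by omega,
    show m + i + 1 = m + 1 + i by omega]

lemma crossCorr_eq_zero_of_even
    (hrefl : ∀ i, m < i → i ≤ 2 * m → a i = (-1) ^ (i + 1) * a (2 * m + 1 - i))
    {k : ℕ} (hk : Even k) : crossCorr a m k = 0 := by
  obtain ⟨r, rfl⟩ := hk
  refine sum_involution (fun j _ => 2 * m + 1 - (r + r) - j) (fun j hj => ?_)
    (fun j hj _ => ?_) (fun j hj => ?_) (fun j hj => ?_)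
  all_goals rw [mem_Ioc] at hj
  · rw [hrefl (j + (r + r)) (by omega) (by omega),
      hrefl (2 * m + 1 - (r + r) - j + (r + r)) (by omega) (by omega),
      show 2 * m + 1 - (j + (r + r)) = 2 * m + 1 - (r + r) - j by omega,
      show 2 * m + 1 - (2 * m + 1 - (r + r) - j + (r + r)) = j by omega,
      neg_one_pow_congr (by simp only [Nat.even_iff]; omega :
        Even (2 * m + 1 - (r + r) - j + (r + r) + 1) ↔ Even (j + (r + r) + 1 + 1)), pow_succ]
    ring
  · omega
  · rw [mem_Ioc]; omega
  · omega

lemma crossCorr_eq_neg_of_odd {p : ℕ → ℤ}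
    (hrefl : ∀ i, m < i → i ≤ 2 * m → a i = (-1) ^ (i + 1) * a (2 * m + 1 - i))
    (hreflp : ∀ i, m < i → i ≤ 2 * m → p i = (-1) ^ (i + 1) * p (2 * m + 1 - i))
    (hpa : ∀ j, 1 ≤ j → j ≤ m → p j = a (m + 1 - j)) {k : ℕ}
    (hmk : Odd (m + k)) : crossCorr p m k = -crossCorr a m (2 * m - k) := by
  rw [crossCorr, crossCorr, ← sum_neg_distrib]
  refine sum_nbij' (fun j => j + k - m) (fun j => j + m - k) ?_ ?_ ?_ ?_ ?_
  all_goals intro j hj; rw [mem_Ioc] at hj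
  · rw [mem_Ioc]; omega
  · rw [mem_Ioc]; omega
  · omega
  · omega
  · rw [hpa j (by omega) (by omega), hreflp (j + k) (by omega) (by omega),
      hpa (2 * m + 1 - (j + k)) (by omega) (by omega), show j + k - m + (2 * m - k) = j + m by omega,
      hrefl (j + m) (by omega) (by omega), show 2 * m + 1 - (j + m) = m + 1 - j by omega,
      show m + 1 - (2 * m + 1 - (j + k)) = j + k - m by omega,
      neg_one_pow_congr (by rw [Nat.odd_iff] at hmk; simp only [Nat.even_iff]; omega :
        Even (j + m + 1) ↔ Even (j + k + 1 + 1)), pow_succ]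
    ring

end Reflection

theorem stmt_18_general (n m : ℕ) (hnm : n = 2 * m) (a p : ℕ → ℤ)
    (ha : ∀ j, 1 ≤ j → j ≤ n → a j = 1 ∨ a j = -1)
    -- `a` is strong symmetric:
    (h4a : 4 ∣ n)
    (hssa : ∀ j, 1 ≤ j → j ≤ n / 2 → a j * a (n + 1 - j) = (-1 : ℤ) ^ j)
    -- `p` is strong symmetric:
    (hssp : ∀ j, 1 ≤ j → j ≤ n / 2 → p j * p (n + 1 - j) = (-1 : ℤ) ^ j)
    -- the first half of `p` is the reversed first half of `a`:
    (hpa : ∀ j, 1 ≤ j → j ≤ m → p j = a (m + 1 - j)) :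
    ∀ k, 1 ≤ k → k < n →
      (Even k → aperiodicCorr p n k = aperiodicCorr a n k) ∧
      (Odd k → aperiodicCorr p n k = -aperiodicCorr a n (n - k)) := by
  subst hnm
  have hm : Even m := by obtain ⟨c, hc⟩ := h4a; exact ⟨c, by omega⟩
  have hrefl := fun i => eq_neg_one_pow_mul_of_strongSymm (i := i)
    (fun j h1 h2 => ha j h1 (by omega)) fun j h1 h2 => hssa j h1 (by omega)
  have hreflp := fun i => eq_neg_one_pow_mul_of_strongSymm (i := i)
    (fun j h1 h2 => hpa j h1 h2 ▸ ha _ (by omega) (by omega)) fun j h1 h2 => hssp j h1 (by omega)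
  have hlower (k : ℕ) : aperiodicCorr p m k = aperiodicCorr a m k := by
    rw [aperiodicCorr.congr k hpa, aperiodicCorr.reflect]
  intro k _ _
  refine ⟨fun hke => ?_, fun hko => ?_⟩
  · rw [aperiodicCorr_two_mul, aperiodicCorr_two_mul, crossCorr_eq_zero_of_even hrefl hke,
      crossCorr_eq_zero_of_even hreflp hke, aperiodicCorr_upper_half hrefl,
      aperiodicCorr_upper_half hreflp, hlower]
  · have hko' : Odd (2 * m - k) := by rw [Nat.odd_iff] at hko ⊢; omega
    rw [aperiodicCorr_two_mul, aperiodicCorr_two_mul, aperiodicCorr_upper_half hrefl,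
      aperiodicCorr_upper_half hreflp, hlower, hko.neg_one_pow, hko'.neg_one_pow,
      crossCorr_eq_neg_of_odd hrefl hreflp hpa (hm.add_odd hko)]
    ring

theorem stmt_18 (n m : ℕ) (hm : 1 ≤ m) (hnm : n = 2 * m) (a p : ℕ → ℤ)
    (ha : ∀ j, 1 ≤ j → j ≤ n → a j = 1 ∨ a j = -1)
    (hp : ∀ j, 1 ≤ j → j ≤ n → p j = 1 ∨ p j = -1)
    -- `a` is strong symmetric:
    (h4a : 4 ∣ n)
    (hssa : ∀ j, 1 ≤ j → j ≤ n / 2 → a j * a (n + 1 - j) = (-1 : ℤ) ^ j)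
    -- `p` is strong symmetric:
    (h4p : 4 ∣ n)
    (hssp : ∀ j, 1 ≤ j → j ≤ n / 2 → p j * p (n + 1 - j) = (-1 : ℤ) ^ j)
    -- the first half of `p` is the reversed first half of `a`:
    (hpa : ∀ j, 1 ≤ j → j ≤ m → p j = a (m + 1 - j)) :
    ∀ k, 1 ≤ k → k < n →
      (Even k → aperiodicCorr p n k = aperiodicCorr a n k) ∧
      (Odd k → aperiodicCorr p n k = -aperiodicCorr a n (n - k)) :=
  stmt_18_general n m hnm a p ha h4a hssa hssp hpa
end
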